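/- Let G and H be joint distributions of (X,Y) on 𝒳 × {0,1}, let 0 ≤ ε < 1, let G̃ = (1-ε)G + εH, and let η̃ be the Bayes decision function of G̃ with G̃(η̃(X)=0) = 0. Let (f̃_n) be a sequence of measurable decision functions trained on samples from G̃ such that their risks under G̃ converge to the Bayes risk of G̃ (as holds almost surely for a universally consistent classification algorithm). Then the risks evaluated under the clean distribution G converge: R_G(f̃_n) → R_G(η̃) as n → ∞. -/

import Mathlib

/-!
Under `G̃` the excess risk of a decision function `f` is `2 ∫_{D(f)} |η̃| dG̃_X`, where `D(f)` is
the set where `f` and `η̃` predict different labels. Hence `∫_{D(f̃ₙ)} |η̃| dG̃_X → 0`, and since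
`η̃ ≠ 0` for `G̃_X`-almost every `x`, Markov's inequality away from a thin neighbourhood of
`{η̃ = 0}` gives `G̃_X(D(f̃ₙ)) → 0`. As `(1 - ε) G ≤ G̃` with `1 - ε > 0`, also `G_X(D(f̃ₙ)) → 0`,
and this bounds `|R_G(f̃ₙ) - R_G(η̃)|`, because the two misclassification events differ only
above `D(f̃ₙ)`.
-/

open MeasureTheory Filter

/-- sign function: 1 if t > 0, -1 otherwise. -/
noncomputable def sgn (t : ℝ) : ℝ := if 0 < t then 1 else -1

/-- Risk under 0-1 loss of the decision rule `1_{f(X)>0}` when `(X,Y) ~ P`,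
    labels encoded as `Bool` (`true` = 1): `R(f) = P(Y ≠ 1_{f(X)>0})`. -/
noncomputable def risk {𝒳 : Type*} [MeasurableSpace 𝒳]
    (P : Measure (𝒳 × Bool)) (f : 𝒳 → ℝ) : ℝ :=
  (P {q | (q.2 = true) ≠ (0 < f q.1)}).toReal

/-- `η` is the Bayes decision function of the joint distribution `P` of `(X,Y)`:
    `η(x) = P(Y=1 | X=x) - 1/2`, i.e. `η` is measurable, takes values in `[-1/2,1/2]`,
    and `∫_A (η + 1/2) dP_X = P(A × {1})` for all measurable `A`. -/
def IsBayesDecisionFunction {𝒳 : Type*} [MeasurableSpace 𝒳]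
    (P : Measure (𝒳 × Bool)) (η : 𝒳 → ℝ) : Prop :=
  Measurable η ∧ (∀ x, η x ∈ Set.Icc (-(1/2) : ℝ) (1/2)) ∧
    ∀ A : Set 𝒳, MeasurableSet A →
      ∫ x in A, (η x + 1/2) ∂(P.map Prod.fst) = (P (A ×ˢ ({true} : Set Bool))).toReal

/-- The contaminated distribution `G̃ = (1-ε)G + εH`. -/
noncomputable def contaminate {Ω : Type*} [MeasurableSpace Ω]
    (G H : Measure Ω) (ε : ℝ) : Measure Ω :=
  ENNReal.ofReal (1 - ε) • G + ENNReal.ofReal ε • H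

open Topology
open scoped ENNReal NNReal symmDiff

section

variable {α : Type*} [MeasurableSpace α] {μ : Measure α} [IsFiniteMeasure μ] {h : α → ℝ≥0∞}

theorem exists_pos_measure_lt_lt (hh : AEMeasurable h μ) (h0 : μ {x | h x = 0} = 0)
    {ε : ℝ≥0∞} (hε : 0 < ε) : ∃ δ : ℝ≥0, 0 < δ ∧ μ {x | h x < δ} < ε := by
  have hlim := tendsto_measure_biInter_gt (μ := μ) (s := fun r : ℝ≥0 => {x | h x < r}) (a := 0)
    (fun _ _ => nullMeasurableSet_lt hh aemeasurable_const)
    (fun _ _ _ hij _ hx => lt_of_lt_of_le hx (ENNReal.coe_le_coe.mpr hij))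
    ⟨1, one_pos, measure_ne_top _ _⟩
  have hinter : (⋂ r > (0 : ℝ≥0), {x | h x < r}) = {x | h x = 0} := by
    ext x
    simp only [Set.mem_iInter, Set.mem_ofPred_eq]
    refine ⟨fun hx => ?_, fun hx r hr => by simpa [hx] using hr⟩
    refine le_antisymm (le_of_forall_gt fun c hc => ?_) zero_le
    obtain ⟨r, hr0, hrc⟩ := ENNReal.lt_iff_exists_nnreal_btwn.mp hc
    exact (hx r (by exact_mod_cast hr0)).trans hrc
  rw [hinter, h0] at hlim
  exact ((hlim.eventually (gt_mem_nhds hε)).and self_mem_nhdsWithin).exists.imp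
    fun δ hδ => ⟨hδ.2, hδ.1⟩

theorem tendsto_measure_of_tendsto_setLIntegral {ι : Type*} {l : Filter ι}
    (hh : AEMeasurable h μ) (h0 : μ {x | h x = 0} = 0) {D : ι → Set α}
    (hD : ∀ i, MeasurableSet (D i)) (hI : Tendsto (fun i => ∫⁻ x in D i, h x ∂μ) l (𝓝 0)) :
    Tendsto (fun i => μ (D i)) l (𝓝 0) := by
  rw [ENNReal.tendsto_nhds_zero]
  intro ε hε
  obtain ⟨δ, hδ, hsmall⟩ := exists_pos_measure_lt_lt hh h0 (ENNReal.half_pos hε.ne')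
  have hδ' : (0 : ℝ≥0∞) < δ := by exact_mod_cast hδ
  have hbound : (0 : ℝ≥0∞) < δ * (ε / 2) := ENNReal.mul_pos hδ'.ne' (ENNReal.half_pos hε.ne').ne'
  filter_upwards [hI.eventually (eventually_le_nhds hbound)] with i hi
  have hmarkov : μ ({x | (δ : ℝ≥0∞) ≤ h x} ∩ D i) ≤ ε / 2 := by
    rw [← ENNReal.mul_le_mul_iff_right hδ'.ne' ENNReal.coe_ne_top, ← Measure.restrict_apply' (hD i)]
    exact (mul_meas_ge_le_lintegral₀ hh.restrict _).trans hi
  calc μ (D i) ≤ μ ({x | (δ : ℝ≥0∞) ≤ h x} ∩ D i ∪ {x | h x < δ}) :=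
        measure_mono fun x hx => (le_or_gt (δ : ℝ≥0∞) (h x)).imp (fun hle => ⟨hle, hx⟩) id
    _ ≤ ε / 2 + ε / 2 := (measure_union_le _ _).trans (add_le_add hmarkov hsmall.le)
    _ = ε := ENNReal.add_halves ε

end

section Classification

variable {𝒳 : Type*}

def misclassified (f : 𝒳 → ℝ) : Set (𝒳 × Bool) := {q | (q.2 = true) ≠ (0 < f q.1)}

theorem misclassified_eq (f : 𝒳 → ℝ) :
    misclassified f = {x | 0 < f x}ᶜ ×ˢ {true} ∪ {x | 0 < f x} ×ˢ {false} := by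
  ext ⟨x, b⟩
  cases b <;> simp [misclassified]

theorem measurableSet_misclassified [MeasurableSpace 𝒳] {f : 𝒳 → ℝ} (hf : Measurable f) :
    MeasurableSet (misclassified f) := by
  have hA : MeasurableSet {x | 0 < f x} := measurableSet_lt measurable_const hf
  rw [misclassified_eq]
  exact (hA.compl.prod (measurableSet_singleton _)).union (hA.prod (measurableSet_singleton _))

theorem misclassified_symmDiff (f g : 𝒳 → ℝ) :
    misclassified f ∆ misclassified g = Prod.fst ⁻¹' ({x | 0 < f x} ∆ {x | 0 < g x}) := by
  ext ⟨x, b⟩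
  simp only [misclassified, Set.mem_symmDiff, Set.mem_preimage, Set.mem_ofPred_eq]
  tauto

theorem abs_risk_sub_risk_le [MeasurableSpace 𝒳] (P : Measure (𝒳 × Bool)) [IsFiniteMeasure P]
    {f g : 𝒳 → ℝ} (hf : Measurable f) (hg : Measurable g) :
    |risk P f - risk P g| ≤ (P (Prod.fst ⁻¹' ({x | 0 < f x} ∆ {x | 0 < g x}))).toReal := by
  rw [← misclassified_symmDiff]
  exact abs_measureReal_sub_le_measureReal_symmDiff
    (measurableSet_misclassified hf).nullMeasurableSet
    (measurableSet_misclassified hg).nullMeasurableSet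

end Classification

namespace IsBayesDecisionFunction

variable {𝒳 : Type*} [MeasurableSpace 𝒳] {P : Measure (𝒳 × Bool)} [IsFiniteMeasure P]
  {η : 𝒳 → ℝ}

theorem integrable (hη : IsBayesDecisionFunction P η) : Integrable η (P.map Prod.fst) :=
  Integrable.of_bound hη.1.aestronglyMeasurable (1 / 2) <| ae_of_all _ fun x =>
    abs_le.mpr (hη.2.1 x)

theorem toReal_measure_prod_false (hη : IsBayesDecisionFunction P η) {A : Set 𝒳}
    (hA : MeasurableSet A) :
    (P (A ×ˢ {false})).toReal = ∫ x in A, (1 / 2 - η x) ∂(P.map Prod.fst) := by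
  have hsplit : P.map Prod.fst A = P (A ×ˢ {false}) + P (A ×ˢ {true}) := by
    rw [Measure.map_apply measurable_fst hA, ← Set.prod_univ, ← measure_union
      (Set.disjoint_prod.mpr (Or.inr (by simp))) (hA.prod (measurableSet_singleton true)),
      ← Set.prod_union]
    congr
    ext b
    cases b <;> simp
  have htrue := hη.2.2 A hA
  rw [integral_add hη.integrable.integrableOn (integrable_const _), setIntegral_const] at htrue
  rw [integral_sub (integrable_const _) hη.integrable.integrableOn, setIntegral_const]
  simp only [measureReal_def, hsplit, smul_eq_mul,
    ENNReal.toReal_add (measure_ne_top _ _) (measure_ne_top _ _)] at htrue ⊢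
  linarith

theorem risk_eq_integral (hη : IsBayesDecisionFunction P η) {g : 𝒳 → ℝ} (hg : Measurable g) :
    risk P g = ∫ x, {x | 0 < g x}.piecewise (fun x => 1 / 2 - η x) (fun x => η x + 1 / 2) x
      ∂(P.map Prod.fst) := by
  have hA : MeasurableSet {x | 0 < g x} := measurableSet_lt measurable_const hg
  have hdisj : Disjoint ({x | 0 < g x}ᶜ ×ˢ {true}) ({x | 0 < g x} ×ˢ ({false} : Set Bool)) :=
    Set.disjoint_prod.mpr (Or.inl disjoint_compl_left)
  rw [risk, ← misclassified, misclassified_eq, measure_union hdisj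
      (hA.prod (measurableSet_singleton _)),
    ENNReal.toReal_add (measure_ne_top _ _) (measure_ne_top _ _),
    integral_piecewise (f := fun x => 1 / 2 - η x) (g := fun x => η x + 1 / 2) hA
      ((integrable_const _).sub hη.integrable).integrableOn
      (hη.integrable.add (integrable_const _)).integrableOn,
    hη.2.2 _ hA.compl, hη.toReal_measure_prod_false hA, add_comm]

theorem risk_sub_risk (hη : IsBayesDecisionFunction P η) {g : 𝒳 → ℝ} (hg : Measurable g) :
    risk P g - risk P η = 2 * ∫ x in {x | 0 < g x} ∆ {x | 0 < η x}, |η x| ∂(P.map Prod.fst) := by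
  have hA : MeasurableSet {x | 0 < g x} := measurableSet_lt measurable_const hg
  have hB : MeasurableSet {x | 0 < η x} := measurableSet_lt measurable_const hη.1
  have hint : ∀ {h : 𝒳 → ℝ}, MeasurableSet {x | 0 < h x} → Integrable
      ({x | 0 < h x}.piecewise (fun x => 1 / 2 - η x) (fun x => η x + 1 / 2)) (P.map Prod.fst) :=
    fun hs => Integrable.piecewise hs ((integrable_const _).sub hη.integrable).integrableOn
      (hη.integrable.add (integrable_const _)).integrableOn
  rw [hη.risk_eq_integral hg, hη.risk_eq_integral hη.1, ← integral_sub (hint hA) (hint hB),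
    ← integral_indicator (hA.symmDiff hB), ← integral_const_mul]
  refine integral_congr_ae (ae_of_all _ fun x => ?_)
  by_cases hgx : 0 < g x <;> by_cases hηx : 0 < η x <;>
    simp [Set.piecewise, Set.indicator, Set.mem_symmDiff, hgx, hηx, abs_of_pos,
      abs_of_nonpos, le_of_not_gt] <;> ring

end IsBayesDecisionFunction

section Contamination

variable {Ω : Type*} [MeasurableSpace Ω] (G H : Measure Ω) {ε : ℝ}

instance isFiniteMeasure_contaminate [IsFiniteMeasure G] [IsFiniteMeasure H] :
    IsFiniteMeasure (contaminate G H ε) := by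
  constructor
  simp only [contaminate, Measure.add_apply, Measure.smul_apply, smul_eq_mul]
  exact ENNReal.add_lt_top.mpr ⟨ENNReal.mul_lt_top ENNReal.ofReal_lt_top (measure_lt_top _ _),
    ENNReal.mul_lt_top ENNReal.ofReal_lt_top (measure_lt_top _ _)⟩

theorem measure_le_inv_mul_contaminate (hε1 : ε < 1) (s : Set Ω) :
    G s ≤ (ENNReal.ofReal (1 - ε))⁻¹ * contaminate G H ε s := by
  have hc : ENNReal.ofReal (1 - ε) ≠ 0 := by simpa using hε1
  calc G s = (ENNReal.ofReal (1 - ε))⁻¹ * (ENNReal.ofReal (1 - ε) * G s) :=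
        (ENNReal.inv_mul_cancel_left hc ENNReal.ofReal_ne_top).symm
    _ ≤ (ENNReal.ofReal (1 - ε))⁻¹ * contaminate G H ε s := by
        gcongr
        exact le_self_add

theorem tendsto_measure_of_tendsto_contaminate {ι : Type*} {l : Filter ι} (hε1 : ε < 1)
    {s : ι → Set Ω} (hs : Tendsto (fun i => contaminate G H ε (s i)) l (𝓝 0)) :
    Tendsto (fun i => G (s i)) l (𝓝 0) := by
  have hc : (ENNReal.ofReal (1 - ε))⁻¹ ≠ ∞ := by simpa using hε1
  have hlim := ENNReal.Tendsto.const_mul hs (Or.inr hc)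
  rw [mul_zero] at hlim
  exact tendsto_of_tendsto_of_tendsto_of_le_of_le tendsto_const_nhds hlim (fun _ => zero_le)
    fun i => measure_le_inv_mul_contaminate G H hε1 (s i)

end Contamination

theorem statement10_general {𝒳 : Type*} [MeasurableSpace 𝒳]
    (G H : Measure (𝒳 × Bool)) [IsProbabilityMeasure G] [IsProbabilityMeasure H]
    (ε : ℝ) (hε1 : ε < 1)
    (ηt : 𝒳 → ℝ)
    (hηt : IsBayesDecisionFunction (contaminate G H ε) ηt)
    (hηt0 : (contaminate G H ε).map Prod.fst {x | ηt x = 0} = 0)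
    (f : ℕ → 𝒳 → ℝ) (hf : ∀ n, Measurable (f n))
    (hrisk : Tendsto (fun n => risk (contaminate G H ε) (f n)) atTop
      (nhds (risk (contaminate G H ε) ηt))) :
    Tendsto (fun n => risk G (f n)) atTop (nhds (risk G ηt)) := by
  set P := contaminate G H ε
  set D : ℕ → Set 𝒳 := fun n => {x | 0 < f n x} ∆ {x | 0 < ηt x}
  have hD : ∀ n, MeasurableSet (D n) := fun n =>
    (measurableSet_lt measurable_const (hf n)).symmDiff (measurableSet_lt measurable_const hηt.1)
  have hI : Tendsto (fun n => ∫⁻ x in D n, ‖ηt x‖ₑ ∂(P.map Prod.fst)) atTop (𝓝 0) := by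
    have hhalf :
        Tendsto (fun n => ENNReal.ofReal ((risk P (f n) - risk P ηt) / 2)) atTop (𝓝 0) := by
      simpa using ENNReal.tendsto_ofReal ((hrisk.sub_const (risk P ηt)).div_const 2)
    refine hhalf.congr fun n => ?_
    rw [hηt.risk_sub_risk (hf n), mul_div_cancel_left₀ _ two_ne_zero,
      ← ofReal_integral_norm_eq_lintegral_enorm hηt.integrable.integrableOn]
    rfl
  have hPD : Tendsto (fun n => P (Prod.fst ⁻¹' D n)) atTop (𝓝 0) := by
    simpa only [Measure.map_apply measurable_fst (hD _)] using
      tendsto_measure_of_tendsto_setLIntegral hηt.1.enorm.aemeasurable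
        (by simpa only [enorm_eq_zero] using hηt0) hD hI
  have hGD := tendsto_measure_of_tendsto_contaminate G H hε1 hPD
  rw [tendsto_iff_norm_sub_tendsto_zero]
  exact squeeze_zero (fun _ => norm_nonneg _) (fun n => abs_risk_sub_risk_le G (hf n) hηt.1)
    ((ENNReal.tendsto_toReal ENNReal.zero_ne_top).comp hGD)

/-- Theorem 2: if the risks of f̃_n under G̃ converge to the Bayes risk of G̃
(and G̃(η̃(X)=0) = 0), then the risks under the clean distribution G converge:
R_G(f̃_n) → R_G(η̃). -/
theorem statement10 {𝒳 : Type*} [MeasurableSpace 𝒳]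
    (G H : Measure (𝒳 × Bool)) [IsProbabilityMeasure G] [IsProbabilityMeasure H]
    (ε : ℝ) (hε : 0 ≤ ε) (hε1 : ε < 1)
    (ηt : 𝒳 → ℝ)
    (hηt : IsBayesDecisionFunction (contaminate G H ε) ηt)
    (hηt0 : (contaminate G H ε).map Prod.fst {x | ηt x = 0} = 0)
    (f : ℕ → 𝒳 → ℝ) (hf : ∀ n, Measurable (f n))
    (hrisk : Tendsto (fun n => risk (contaminate G H ε) (f n)) atTop
      (nhds (risk (contaminate G H ε) ηt))) :
    Tendsto (fun n => risk G (f n)) atTop (nhds (risk G ηt)) :=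
  statement10_general G H ε hε1 ηt hηt hηt0 f hf hrisk
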